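/- arXiv:0705.1552 — 6 statements merged into one kernel-verified Lean document; each statement's English description precedes it below -/
import Mathlib

section
/- Let ω₁ < 0 < ω₂ be real numbers and let n₁, n₂ be integers, not both zero. Then there exists λ ∈ ℝ such that the quadratic form on ℝ² × ℝ² given by (w₁, w₂) ↦ (1/2)((ω₁ + λn₁)‖w₁‖² + (ω₂ + λn₂)‖w₂‖²) is definite (positive definite or negative definite) if and only if ω₁n₂ − ω₂n₁ ≠ 0. -/
/-!
Along the line `l ↦ (a, b) = (ω₁ + l r₁, ω₂ + l r₂)` the diagonal form is definite exactly when
`a b > 0`. As a function of `l`, `a b` is a quadratic whose discriminant is `(ω₁ r₂ - ω₂ r₁)²`,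
so it takes a positive value as soon as the determinant is nonzero. If the determinant vanishes,
`a ω₂ = b ω₁`, so `a b ω₂ = b² ω₁ ≤ 0` and `a b` never becomes positive.
-/

lemma discrim_mul_affine {R : Type*} [CommRing R] (ω₁ ω₂ r₁ r₂ : R) :
    discrim (r₁ * r₂) (ω₁ * r₂ + ω₂ * r₁) (ω₁ * ω₂) = (ω₁ * r₂ - ω₂ * r₁) ^ 2 := by
  unfold discrim
  ring

section LineThroughQuadrant

variable {K : Type*} [Field K] [LinearOrder K] [IsStrictOrderedRing K]

lemma exists_mul_affine_pos_of_det_ne_zero {ω₁ ω₂ r₁ r₂ : K} (hdet : ω₁ * r₂ - ω₂ * r₁ ≠ 0) :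
    ∃ l : K, 0 < (ω₁ + l * r₁) * (ω₂ + l * r₂) := by
  by_contra! hle
  have hdisc : discrim (-(r₁ * r₂)) (-(ω₁ * r₂ + ω₂ * r₁)) (-(ω₁ * ω₂)) ≤ 0 :=
    discrim_le_zero fun l => by linarith [hle l]
  have hneg : discrim (-(r₁ * r₂)) (-(ω₁ * r₂ + ω₂ * r₁)) (-(ω₁ * ω₂)) =
      discrim (r₁ * r₂) (ω₁ * r₂ + ω₂ * r₁) (ω₁ * ω₂) := by
    unfold discrim
    ring
  rw [hneg, discrim_mul_affine] at hdisc
  exact hdet (pow_eq_zero_iff two_ne_zero |>.mp (hdisc.antisymm (sq_nonneg _)))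

lemma mul_affine_nonpos_of_det_eq_zero {ω₁ ω₂ r₁ r₂ : K} (hω₁ : ω₁ ≤ 0) (hω₂ : 0 < ω₂)
    (hdet : ω₁ * r₂ - ω₂ * r₁ = 0) (l : K) :
    (ω₁ + l * r₁) * (ω₂ + l * r₂) ≤ 0 := by
  have h : (ω₁ + l * r₁) * (ω₂ + l * r₂) * ω₂ = (ω₂ + l * r₂) ^ 2 * ω₁ := by
    linear_combination (-(ω₂ + l * r₂) * l) * hdet
  refine nonpos_of_mul_nonpos_left ?_ hω₂
  rw [h]
  exact mul_nonpos_of_nonneg_of_nonpos (sq_nonneg _) hω₁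

theorem exists_mul_affine_pos_iff {ω₁ ω₂ r₁ r₂ : K} (hω₁ : ω₁ ≤ 0) (hω₂ : 0 < ω₂) :
    (∃ l : K, 0 < (ω₁ + l * r₁) * (ω₂ + l * r₂)) ↔ ω₁ * r₂ - ω₂ * r₁ ≠ 0 := by
  refine ⟨fun ⟨l, hl⟩ hdet => ?_, exists_mul_affine_pos_of_det_ne_zero⟩
  exact (mul_affine_nonpos_of_det_eq_zero hω₁ hω₂ hdet l).not_gt hl

end LineThroughQuadrant

section DiagonalForm

variable {E F : Type*} [NormedAddCommGroup E] [NormedAddCommGroup F] [Nontrivial E]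
  [Nontrivial F]

lemma forall_ne_zero_diagonal_pos_iff (a b : ℝ) :
    (∀ w : E × F, w ≠ 0 → 0 < a * ‖w.1‖ ^ 2 + b * ‖w.2‖ ^ 2) ↔ 0 < a ∧ 0 < b := by
  constructor
  · intro h
    obtain ⟨x, hx⟩ := exists_ne (0 : E)
    obtain ⟨y, hy⟩ := exists_ne (0 : F)
    have ha : 0 < a * ‖x‖ ^ 2 := by simpa using h (x, 0) (by simp [hx])
    have hb : 0 < b * ‖y‖ ^ 2 := by simpa using h (0, y) (by simp [hy])
    exact ⟨pos_of_mul_pos_left ha (by positivity), pos_of_mul_pos_left hb (by positivity)⟩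
  · rintro ⟨ha, hb⟩ ⟨x, y⟩ hw
    rcases eq_or_ne x 0 with rfl | hx
    · have hy : y ≠ 0 := fun hy => hw (by simp [hy])
      simpa using mul_pos hb (by positivity : 0 < ‖y‖ ^ 2)
    · have := mul_pos ha (by positivity : 0 < ‖x‖ ^ 2)
      have := mul_nonneg hb.le (sq_nonneg ‖y‖)
      dsimp only
      linarith

lemma forall_ne_zero_diagonal_neg_iff (a b : ℝ) :
    (∀ w : E × F, w ≠ 0 → a * ‖w.1‖ ^ 2 + b * ‖w.2‖ ^ 2 < 0) ↔ a < 0 ∧ b < 0 := by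
  have h := forall_ne_zero_diagonal_pos_iff (E := E) (F := F) (-a) (-b)
  simp only [neg_mul, ← neg_add, neg_pos] at h
  exact h

theorem diagonal_definite_iff (a b : ℝ) :
    ((∀ w : E × F, w ≠ 0 → 0 < a * ‖w.1‖ ^ 2 + b * ‖w.2‖ ^ 2) ∨
      (∀ w : E × F, w ≠ 0 → a * ‖w.1‖ ^ 2 + b * ‖w.2‖ ^ 2 < 0)) ↔ 0 < a * b := by
  rw [forall_ne_zero_diagonal_pos_iff, forall_ne_zero_diagonal_neg_iff, mul_pos_iff]

end DiagonalForm

theorem stmt_0_general (ω₁ ω₂ : ℝ) (n₁ n₂ : ℤ) (hω₁ : ω₁ < 0) (hω₂ : 0 < ω₂) :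
    (∃ l : ℝ,
      (∀ w : EuclideanSpace ℝ (Fin 2) × EuclideanSpace ℝ (Fin 2), w ≠ 0 →
        0 < (1/2) * ((ω₁ + l * (n₁ : ℝ)) * ‖w.1‖^2 + (ω₂ + l * (n₂ : ℝ)) * ‖w.2‖^2)) ∨
      (∀ w : EuclideanSpace ℝ (Fin 2) × EuclideanSpace ℝ (Fin 2), w ≠ 0 →
        (1/2) * ((ω₁ + l * (n₁ : ℝ)) * ‖w.1‖^2 + (ω₂ + l * (n₂ : ℝ)) * ‖w.2‖^2) < 0))
    ↔ ω₁ * (n₂ : ℝ) - ω₂ * (n₁ : ℝ) ≠ 0 := by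
  have half_pos_iff : ∀ x : ℝ, 0 < 1 / 2 * x ↔ 0 < x := fun x =>
    mul_pos_iff_of_pos_left (by norm_num)
  have half_neg_iff : ∀ x : ℝ, 1 / 2 * x < 0 ↔ x < 0 := fun x => by
    constructor <;> intro <;> linarith
  simp only [half_pos_iff, half_neg_iff, diagonal_definite_iff]
  exact exists_mul_affine_pos_iff hω₁.le hω₂

/-- Algebraic core of Proposition 3.3: there exists `l` making the quadratic form
`(w₁, w₂) ↦ (1/2)((ω₁ + l·n₁)‖w₁‖² + (ω₂ + l·n₂)‖w₂‖²)` on `ℝ² × ℝ²` definite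
iff `ω₁ n₂ − ω₂ n₁ ≠ 0`. -/
theorem stmt_0 (ω₁ ω₂ : ℝ) (n₁ n₂ : ℤ) (hω₁ : ω₁ < 0) (hω₂ : 0 < ω₂)
    (hn : ¬(n₁ = 0 ∧ n₂ = 0)) :
    (∃ l : ℝ,
      (∀ w : EuclideanSpace ℝ (Fin 2) × EuclideanSpace ℝ (Fin 2), w ≠ 0 →
        0 < (1/2) * ((ω₁ + l * (n₁ : ℝ)) * ‖w.1‖^2 + (ω₂ + l * (n₂ : ℝ)) * ‖w.2‖^2)) ∨
      (∀ w : EuclideanSpace ℝ (Fin 2) × EuclideanSpace ℝ (Fin 2), w ≠ 0 →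
        (1/2) * ((ω₁ + l * (n₁ : ℝ)) * ‖w.1‖^2 + (ω₂ + l * (n₂ : ℝ)) * ‖w.2‖^2) < 0))
    ↔ ω₁ * (n₂ : ℝ) - ω₂ * (n₁ : ℝ) ≠ 0 :=
  stmt_0_general ω₁ ω₂ n₁ n₂ hω₁ hω₂
end

section
/- Let F_p, F_q, F_l, S_e be real numbers with F_p > 0, and set F = F_l − (i/2)S_e ∈ ℂ. There exists λ ∈ ℝ such that the real quadratic form on ℝ⁴ ≅ ℂ² given by (q, p) ↦ (F_p/2)|p + Fq|² + λ(q₁p₂ − q₂p₁) + (F_q/2)|q|², where q = q₁ + iq₂, p = p₁ + ip₂, is positive definite if and only if F_p²S_e² + 4F_pF_q > 0. -/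
/-!
Substituting `w = p + F q` turns the form into
`(F_p/2)|w|² + λ Im(q̄ w) + (F_q/2 + λ S_e/2)|q|²`, because `Im(q̄ p) = q₁p₂ − q₂p₁` and
`Im(q̄ F q) = Im F · |q|² = −(S_e/2)|q|²`. A form `a|w|² + b Im(q̄ w) + c|q|²` with `a > 0` is
positive definite iff `b² < 4ac`, by completing the square: `4a · form = |2aw + ibq|² + (4ac − b²)|q|²`.
So a suitable `λ` exists iff `λ² < F_p S_e λ + F_p F_q` has a real solution, i.e. iff the discriminant
`F_p² S_e² + 4 F_p F_q` is positive.
-/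

open ComplexConjugate

def IsPosDefOn (f : ℂ → ℂ → ℝ) : Prop :=
  ∀ q p : ℂ, ¬(q = 0 ∧ p = 0) → 0 < f q p

theorem isPosDefOn_shear_iff (f : ℂ → ℂ → ℝ) (F : ℂ) :
    IsPosDefOn (fun q p => f q (p + F * q)) ↔ IsPosDefOn f := by
  constructor
  · intro h q w hqw
    simpa using h q (w - F * q) (by rintro ⟨rfl, hw⟩; simp_all)
  · intro h q p hqp
    exact h q (p + F * q) (by rintro ⟨rfl, hp⟩; simp_all)

/-- `(conj q * w).im = q₁w₂ − q₂w₁` is the residual `SO(2)` momentum. -/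
noncomputable def momentumForm (a b c : ℝ) (q w : ℂ) : ℝ :=
  a * ‖w‖ ^ 2 + b * (conj q * w).im + c * ‖q‖ ^ 2

theorem four_mul_momentumForm (a b c : ℝ) (q w : ℂ) :
    4 * a * momentumForm a b c q w
      = ‖2 * a * w + Complex.I * b * q‖ ^ 2 + (4 * a * c - b ^ 2) * ‖q‖ ^ 2 := by
  simp only [momentumForm, Complex.sq_norm, Complex.normSq_apply, Complex.mul_im, Complex.mul_re,
    Complex.add_re, Complex.add_im, Complex.conj_re, Complex.conj_im, Complex.re_ofNat,
    Complex.im_ofNat, Complex.ofReal_re, Complex.ofReal_im, Complex.I_re, Complex.I_im]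
  ring

theorem isPosDefOn_momentumForm_iff {a : ℝ} (ha : 0 < a) (b c : ℝ) :
    IsPosDefOn (momentumForm a b c) ↔ b ^ 2 < 4 * a * c := by
  constructor
  · intro h
    set w : ℂ := Complex.I * (-b / (2 * a))
    have hw : 2 * a * w + Complex.I * b * 1 = 0 := by
      have : (a : ℂ) ≠ 0 := by exact_mod_cast ha.ne'
      simp only [w]
      field_simp
      ring
    have key := four_mul_momentumForm a b c 1 w
    rw [hw, norm_zero, norm_one] at key
    nlinarith [h 1 w (by simp)]
  · intro hbc q w hqw
    have key := four_mul_momentumForm a b c q w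
    rcases eq_or_ne q 0 with rfl | hq
    · have hw : w ≠ 0 := fun hw => hqw ⟨rfl, hw⟩
      simp only [momentumForm, map_zero, zero_mul, Complex.zero_im, mul_zero, add_zero, norm_zero,
        ne_eq, OfNat.ofNat_ne_zero, not_false_eq_true, zero_pow]
      positivity
    · have : 0 < 4 * a * momentumForm a b c q w := by
        rw [key]
        have := norm_pos_iff.2 hq
        positivity
      exact pos_of_mul_pos_right this (by positivity)

theorem exists_sq_lt_mul_add_iff (b c : ℝ) :
    (∃ x : ℝ, x ^ 2 < b * x + c) ↔ 0 < b ^ 2 + 4 * c := by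
  constructor
  · rintro ⟨x, hx⟩
    nlinarith [sq_nonneg (2 * x - b)]
  · intro h
    exact ⟨b / 2, by nlinarith⟩

theorem im_conj_mul_add_mul (q p F : ℂ) :
    (conj q * (p + F * q)).im = q.re * p.im - q.im * p.re + F.im * ‖q‖ ^ 2 := by
  simp only [Complex.mul_im, Complex.mul_re, Complex.add_re, Complex.add_im, Complex.conj_re,
    Complex.conj_im, Complex.sq_norm, Complex.normSq_apply]
  ring

/-- Remark after Theorem 4.3: formal stability of the falling, spinning relative
equilibrium — there exists `λ` such that
`(q, p) ↦ (F_p/2)|p + Fq|² + λ(q₁p₂ − q₂p₁) + (F_q/2)|q|²` is positive definite —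
holds iff the spectral stability condition `F_p²S_e² + 4F_pF_q > 0` holds. -/
theorem stmt_9 (Fp Fq Fl Se : ℝ) (hFp : 0 < Fp) :
    letI F : ℂ := (Fl : ℂ) - (Complex.I / 2) * (Se : ℂ)
    (∃ lam : ℝ, ∀ q p : ℂ, ¬(q = 0 ∧ p = 0) →
        0 < Fp / 2 * ‖p + F * q‖^2 + lam * (q.re * p.im - q.im * p.re)
            + Fq / 2 * ‖q‖^2)
      ↔ 0 < Fp^2 * Se^2 + 4 * Fp * Fq := by
  set F : ℂ := (Fl : ℂ) - (Complex.I / 2) * (Se : ℂ)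
  have hF : F.im = -(Se / 2) := by
    simp only [F, Complex.sub_im, Complex.mul_im, Complex.ofReal_re, Complex.ofReal_im,
      Complex.div_ofNat_re, Complex.div_ofNat_im, Complex.I_re, Complex.I_im]
    ring
  have hform (lam : ℝ) (q p : ℂ) :
      Fp / 2 * ‖p + F * q‖^2 + lam * (q.re * p.im - q.im * p.re) + Fq / 2 * ‖q‖^2
        = momentumForm (Fp / 2) lam (Fq / 2 + lam * Se / 2) q (p + F * q) := by
    rw [momentumForm, im_conj_mul_add_mul, hF]
    ring
  calc _ ↔ ∃ lam : ℝ, IsPosDefOn (momentumForm (Fp / 2) lam (Fq / 2 + lam * Se / 2)) := by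
        refine exists_congr fun lam => ?_
        rw [← isPosDefOn_shear_iff _ F]
        simp only [IsPosDefOn, hform]
    _ ↔ ∃ lam : ℝ, lam ^ 2 < Fp * Se * lam + Fp * Fq := by
        simp only [isPosDefOn_momentumForm_iff (half_pos hFp)]
        exact exists_congr fun lam => iff_of_eq (by ring_nf)
    _ ↔ _ := by
        rw [exists_sq_lt_mul_add_iff]
        ring_nf
end

section
/- For (q₁, q₂) ∈ ℝ² with q₁² + q₂² < 1, set Γ₃ = √(1 − q₁² − q₂²), f = 1/(1 + Γ₃), x = (q₂, −q₁, 0) ∈ ℝ³, let x̂ be the 3×3 antisymmetric matrix with x̂v = x × v for all v, and define the 3×3 real matrix A = I + x̂ + f·x̂². Then for all real numbers p̃₁, p̃₂, with p̃ = (p̃₁, p̃₂, 0): ‖e₃ × (Aᵗ(e₃ × p̃))‖² = p̃₁² + p̃₂² − (q₂p̃₁ − q₁p̃₂)², where e₃ = (0,0,1) and ‖·‖ is the Euclidean norm on ℝ³. -/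
open Matrix

/-!
`x̂` is antisymmetric with `x̂³ = -‖x‖² x̂`, so `A Aᵀ = (I + f x̂²)² - x̂² = I + (2f - 1 - f²‖x‖²) x̂²`,
and `f = 1 / (1 + Γ₃)` with `Γ₃² = 1 - ‖x‖²` is a root of `f²‖x‖² - 2f + 1`: `A` is a rotation.
Lagrange's identity and `‖e₃‖ = 1` then give
`‖e₃ × Aᵀu‖² = ‖Aᵀu‖² - (e₃ · Aᵀu)² = ‖u‖² - (Ae₃ · u)²` for `u = e₃ × p̃ = (-p̃₂, p̃₁, 0)`,
and the horizontal part of `Ae₃ = e₃ + x × e₃ + f x × (x × e₃)` is `(-q₁, -q₂)`.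
-/

section CrossProductMatrix

variable {R : Type*} [CommRing R] {x : Fin 3 → R} {X : Matrix (Fin 3) (Fin 3) R}

theorem transpose_eq_neg_of_mulVec_eq_cross (hX : ∀ v, X *ᵥ v = x ⨯₃ v) : Xᵀ = -X := by
  ext i j
  have hij := congrFun (hX (Pi.single j 1)) i
  have hji := congrFun (hX (Pi.single i 1)) j
  rw [mulVec_single_one] at hij hji
  fin_cases i <;> fin_cases j <;> simp_all [cross_apply]

theorem mul_mul_self_eq_neg_smul_of_mulVec_eq_cross (hX : ∀ v, X *ᵥ v = x ⨯₃ v) :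
    X * X * X = -(x ⬝ᵥ x) • X := by
  refine ext_iff_mulVec.mpr fun v => ?_
  rw [← mulVec_mulVec, ← mulVec_mulVec, hX, hX, hX, smul_mulVec, hX,
    cross_cross_eq_smul_sub_smul', dot_self_cross, zero_smul, zero_sub, neg_smul]

theorem one_add_add_smul_mul_self_mulVec_of_mulVec_eq_cross (hX : ∀ v, X *ᵥ v = x ⨯₃ v)
    (f : R) (v : Fin 3 → R) :
    (1 + X + f • (X * X)) *ᵥ v = v + x ⨯₃ v + f • x ⨯₃ (x ⨯₃ v) := by
  rw [add_mulVec, add_mulVec, one_mulVec, smul_mulVec, ← mulVec_mulVec, hX, hX]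

end CrossProductMatrix

theorem one_add_add_smul_mul_self_mul_transpose {R n : Type*} [CommRing R] [Fintype n]
    [DecidableEq n] {X : Matrix n n R} {s f : R} (hXt : Xᵀ = -X) (hX3 : X * X * X = -s • X)
    (hf : f ^ 2 * s - 2 * f + 1 = 0) :
    (1 + X + f • (X * X)) * (1 + X + f • (X * X))ᵀ = 1 := by
  rw [transpose_add, transpose_add, transpose_one, transpose_smul, transpose_mul, hXt,
    neg_mul_neg]
  simp only [add_mul, mul_add, Matrix.one_mul, Matrix.mul_one, Matrix.smul_mul, Matrix.mul_smul,
    Matrix.mul_neg, ← Matrix.mul_assoc, hX3]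
  linear_combination (norm := module) -(hf • (X * X))

theorem cross_transpose_mulVec_dotProduct_self {R : Type*} [CommRing R]
    {A : Matrix (Fin 3) (Fin 3) R} (hA : A * Aᵀ = 1) (e u : Fin 3 → R) :
    e ⨯₃ (Aᵀ *ᵥ u) ⬝ᵥ e ⨯₃ (Aᵀ *ᵥ u) = e ⬝ᵥ e * u ⬝ᵥ u - ((A *ᵥ e) ⬝ᵥ u) ^ 2 := by
  rw [cross_dot_cross, dotProduct_comm (Aᵀ *ᵥ u) e, dotProduct_mulVec, dotProduct_mulVec,
    vecMul_transpose, vecMul_transpose, mulVec_mulVec, hA, one_mulVec, sq]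

theorem one_div_one_add_sq_mul_sub_two_mul_add_one {K : Type*} [Field K] {s Γ : K}
    (hΓ : Γ ^ 2 = 1 - s) (hΓ₁ : 1 + Γ ≠ 0) :
    (1 / (1 + Γ)) ^ 2 * s - 2 * (1 / (1 + Γ)) + 1 = 0 := by
  field_simp
  linear_combination hΓ

/-- Identity from the proof of Proposition 4.1: with `A = I + x̂ + f·x̂²` the slice
parametrization of attitudes, for `p̃ = (p̃₁, p̃₂, 0)`,
`‖e₃ × (Aᵗ(e₃ × p̃))‖² = p̃₁² + p̃₂² − (q₂p̃₁ − q₁p̃₂)²`. -/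
theorem stmt_11 (q₁ q₂ : ℝ) (hq : q₁^2 + q₂^2 < 1)
    (X : Matrix (Fin 3) (Fin 3) ℝ)
    (hX : ∀ v : Fin 3 → ℝ, X.mulVec v = crossProduct ![q₂, -q₁, 0] v) :
    letI Γ₃ : ℝ := Real.sqrt (1 - q₁^2 - q₂^2)
    letI f : ℝ := 1 / (1 + Γ₃)
    letI A : Matrix (Fin 3) (Fin 3) ℝ := 1 + X + f • (X * X)
    ∀ pt₁ pt₂ : ℝ,
      letI w : Fin 3 → ℝ :=
        crossProduct ![0, 0, 1] (Aᵀ.mulVec (crossProduct ![0, 0, 1] ![pt₁, pt₂, 0]))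
      (w 0)^2 + (w 1)^2 + (w 2)^2 = pt₁^2 + pt₂^2 - (q₂ * pt₁ - q₁ * pt₂)^2 := by
  intro pt₁ pt₂
  have hx : ![q₂, -q₁, 0] ⬝ᵥ ![q₂, -q₁, 0] = q₁ ^ 2 + q₂ ^ 2 := by
    simp only [dotProduct_cons, head_cons, tail_cons, dotProduct_of_isEmpty]
    ring
  have hΓ : √(1 - q₁ ^ 2 - q₂ ^ 2) ^ 2 = 1 - ![q₂, -q₁, 0] ⬝ᵥ ![q₂, -q₁, 0] := by
    rw [Real.sq_sqrt (by linarith), hx]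
    ring
  have hA := one_add_add_smul_mul_self_mul_transpose (transpose_eq_neg_of_mulVec_eq_cross hX)
    (mul_mul_self_eq_neg_smul_of_mulVec_eq_cross hX)
    (one_div_one_add_sq_mul_sub_two_mul_add_one hΓ (by positivity))
  have hsq (w : Fin 3 → ℝ) : w 0 ^ 2 + w 1 ^ 2 + w 2 ^ 2 = w ⬝ᵥ w := by
    simp only [vec3_dotProduct, sq]
  rw [hsq, cross_transpose_mulVec_dotProduct_self hA,
    one_add_add_smul_mul_self_mulVec_of_mulVec_eq_cross hX]
  simp only [cross_apply, smul_cons, add_cons, dotProduct_cons, dotProduct_of_isEmpty, head_cons,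
    tail_cons, cons_val_zero, cons_val_one, cons_val, smul_eq_mul, smul_empty, empty_add_empty]
  ring
end

section
/- For (q₁, q₂) ∈ ℝ² with q₁² + q₂² < 1, set Γ₃ = √(1 − q₁² − q₂²), f = 1/(1 + Γ₃), x = (q₂, −q₁, 0) ∈ ℝ³, let x̂ be the 3×3 antisymmetric matrix with x̂v = x × v for all v, and define the 3×3 real matrix A = I + x̂ + f·x̂². For real numbers p₁, p₂, ν, set p̃₁ = p₂ − f q₁ ν, p̃₂ = −p₁ − f q₂ ν, p̃ = (p̃₁, p̃₂, 0), Π = −e₃ × (Aᵗ(e₃ × p̃)) − ν·e₃, and Γ = Aᵗe₃. Then Π·Γ = q₁p₂ − q₂p₁ − ν. -/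
/-!
With `x = (q₂, -q₁, 0)` the attitude matrix is explicit (`attitude_eq`); its last row is
`Γ = (q₁, q₂, 1 - f|q|²)`, and for horizontal `p̃` one finds
`-(e₃ × Aᵀ(e₃ × p̃)) = (1 - f|q|²) p̃ + f (q·p̃) (q₁, q₂, 0)`. Hence
`Π·Γ = (q·p̃)(1 - f|q|² + f|q|²) - ν(1 - f|q|²) = q·p̃ - ν + f|q|²ν`, and the last term cancels the
`f`-terms of `q·p̃`. The identity thus holds for every value of `f`.
-/

open Matrix

variable {R : Type*} [CommRing R]

def crossMatrix (x : Fin 3 → R) : Matrix (Fin 3) (Fin 3) R :=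
  !![0, -x 2, x 1; x 2, 0, -x 0; -x 1, x 0, 0]

theorem crossMatrix_mulVec (x v : Fin 3 → R) : crossMatrix x *ᵥ v = x ⨯₃ v := by
  ext i
  fin_cases i <;> simp [crossMatrix, cross_apply, vecHead, vecTail] <;> ring

theorem eq_crossMatrix_of_mulVec_eq_cross {X : Matrix (Fin 3) (Fin 3) R} {x : Fin 3 → R}
    (hX : ∀ v, X *ᵥ v = x ⨯₃ v) : X = crossMatrix x :=
  ext_iff_mulVec.2 fun v => by rw [hX, crossMatrix_mulVec]

def attitude (q₁ q₂ f : R) : Matrix (Fin 3) (Fin 3) R :=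
  1 + crossMatrix ![q₂, -q₁, 0] + f • (crossMatrix ![q₂, -q₁, 0] * crossMatrix ![q₂, -q₁, 0])

theorem attitude_eq (q₁ q₂ f : R) :
    attitude q₁ q₂ f =
      !![1 - f * q₁ ^ 2, -(f * q₁ * q₂), -q₁;
        -(f * q₁ * q₂), 1 - f * q₂ ^ 2, -q₂;
        q₁, q₂, 1 - f * (q₁ ^ 2 + q₂ ^ 2)] := by
  ext i j
  fin_cases i <;> fin_cases j <;> simp [attitude, crossMatrix, one_apply] <;> ring

theorem attitude_transpose_mulVec_e3 (q₁ q₂ f : R) :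
    (attitude q₁ q₂ f)ᵀ *ᵥ ![0, 0, 1] = ![q₁, q₂, 1 - f * (q₁ ^ 2 + q₂ ^ 2)] := by
  ext i
  fin_cases i <;> simp [attitude_eq, mulVec_transpose]

theorem neg_cross_e3_attitude_transpose_mulVec_cross_e3 (q₁ q₂ f a b : R) :
    -(![0, 0, 1] ⨯₃ ((attitude q₁ q₂ f)ᵀ *ᵥ (![0, 0, 1] ⨯₃ ![a, b, 0]))) =
      (1 - f * (q₁ ^ 2 + q₂ ^ 2)) • ![a, b, 0] + (f * (q₁ * a + q₂ * b)) • ![q₁, q₂, 0] := by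
  ext i
  fin_cases i <;> simp [attitude_eq, cross_apply, mulVec_transpose] <;> ring

theorem stmt_12_general (q₁ q₂ : ℝ)
    (X : Matrix (Fin 3) (Fin 3) ℝ)
    (hX : ∀ v : Fin 3 → ℝ, X.mulVec v = crossProduct ![q₂, -q₁, 0] v)
    (p₁ p₂ ν : ℝ) :
    letI Γ₃ : ℝ := Real.sqrt (1 - q₁^2 - q₂^2)
    letI f : ℝ := 1 / (1 + Γ₃)
    letI A : Matrix (Fin 3) (Fin 3) ℝ := 1 + X + f • (X * X)
    letI pt₁ : ℝ := p₂ - f * q₁ * ν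
    letI pt₂ : ℝ := -p₁ - f * q₂ * ν
    letI Piv : Fin 3 → ℝ :=
      -(crossProduct ![0, 0, 1] (Aᵀ.mulVec (crossProduct ![0, 0, 1] ![pt₁, pt₂, 0])))
        - ν • ![0, 0, 1]
    letI Γ : Fin 3 → ℝ := Aᵀ.mulVec ![0, 0, 1]
    Piv 0 * Γ 0 + Piv 1 * Γ 1 + Piv 2 * Γ 2 = q₁ * p₂ - q₂ * p₁ - ν := by
  obtain rfl := eq_crossMatrix_of_mulVec_eq_cross hX
  generalize 1 / (1 + √(1 - q₁ ^ 2 - q₂ ^ 2)) = f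
  rw [← attitude.eq_1, attitude_transpose_mulVec_e3,
    neg_cross_e3_attitude_transpose_mulVec_cross_e3]
  simp only [Pi.add_apply, Pi.sub_apply, Pi.smul_apply, smul_eq_mul, cons_val_zero, cons_val_one,
    cons_val_two, head_cons, tail_cons]
  ring

/-- Remark 4.2 (reduced SO(2) momentum): with `A = I + x̂ + f·x̂²`,
`p̃₁ = p₂ − fq₁ν`, `p̃₂ = −p₁ − fq₂ν`, `Π = −e₃ × (Aᵗ(e₃ × p̃)) − ν·e₃` and
`Γ = Aᵗe₃`, one has `Π·Γ = q₁p₂ − q₂p₁ − ν`. -/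
theorem stmt_12 (q₁ q₂ : ℝ) (hq : q₁^2 + q₂^2 < 1)
    (X : Matrix (Fin 3) (Fin 3) ℝ)
    (hX : ∀ v : Fin 3 → ℝ, X.mulVec v = crossProduct ![q₂, -q₁, 0] v)
    (p₁ p₂ ν : ℝ) :
    letI Γ₃ : ℝ := Real.sqrt (1 - q₁^2 - q₂^2)
    letI f : ℝ := 1 / (1 + Γ₃)
    letI A : Matrix (Fin 3) (Fin 3) ℝ := 1 + X + f • (X * X)
    letI pt₁ : ℝ := p₂ - f * q₁ * ν
    letI pt₂ : ℝ := -p₁ - f * q₂ * ν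
    letI Piv : Fin 3 → ℝ :=
      -(crossProduct ![0, 0, 1] (Aᵀ.mulVec (crossProduct ![0, 0, 1] ![pt₁, pt₂, 0])))
        - ν • ![0, 0, 1]
    letI Γ : Fin 3 → ℝ := Aᵀ.mulVec ![0, 0, 1]
    Piv 0 * Γ 0 + Piv 1 * Γ 1 + Piv 2 * Γ 2 = q₁ * p₂ - q₂ * p₁ - ν :=
  stmt_12_general q₁ q₂ X hX p₁ p₂ ν
end

section
/- Let F_p, F_q, F_l, ν, m, g, l be real numbers. For (q₁, q₂) ∈ ℝ² with q₁² + q₂² < 1 set Γ₃ = √(1 − q₁² − q₂²) and f = 1/(1 + Γ₃), and define H(q₁, q₂, p₁, p₂) = (F_p/2)((p₁ + F_lΓ₃q₁ + νf q₂)² − (q₁p₁ + q₂p₂)² + (p₂ + F_lΓ₃q₂ − νf q₁)²) + (F_q/2)(q₁² + q₂²) + mgl(f − 1/2)(q₁² + q₂²) + (1/2)F_pF_l²(q₁² + q₂²)². Then H is invariant under the diagonal SO(2) action: for every θ ∈ ℝ, H(q₁cosθ − q₂sinθ, q₁sinθ + q₂cosθ, p₁cosθ − p₂sinθ, p₁sinθ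 + p₂cosθ) = H(q₁, q₂, p₁, p₂). -/
/-!
With `X = F_l Γ₃` and `Y = ν f`, both functions of `|q|²` alone, the Hamiltonian depends on
`(q, p)` only through `|q|²`, `⟨q, p⟩` and `|p + (X - iY) q|²` (identifying `ℝ²` with `ℂ`).
The map `(q, p) ↦ p + (X - iY) q` commutes with multiplication by `e^{iθ}`, so all three
quantities are rotation invariant.
-/

/-- The ℝ³×SO(2)-reduced Hamiltonian of the Kirchhoff model at vertical momentum
(equation (HamRedVert)). -/
noncomputable def HamRedVert (Fp Fq Fl ν m g l q₁ q₂ p₁ p₂ : ℝ) : ℝ :=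
  let Γ₃ := Real.sqrt (1 - q₁^2 - q₂^2)
  let f := 1 / (1 + Γ₃)
  Fp / 2 * ((p₁ + Fl * Γ₃ * q₁ + ν * f * q₂)^2 - (q₁ * p₁ + q₂ * p₂)^2
      + (p₂ + Fl * Γ₃ * q₂ - ν * f * q₁)^2)
    + Fq / 2 * (q₁^2 + q₂^2)
    + m * g * l * (f - 1/2) * (q₁^2 + q₂^2)
    + 1/2 * Fp * Fl^2 * (q₁^2 + q₂^2)^2

open Real

section Rotation

variable (θ : ℝ)

theorem sq_add_sq_rotate (a b : ℝ) :
    (a * cos θ - b * sin θ)^2 + (a * sin θ + b * cos θ)^2 = a^2 + b^2 := by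
  linear_combination (a^2 + b^2) * sin_sq_add_cos_sq θ

theorem one_sub_sq_sub_sq_rotate (a b : ℝ) :
    1 - (a * cos θ - b * sin θ)^2 - (a * sin θ + b * cos θ)^2 = 1 - a^2 - b^2 := by
  rw [sub_sub, sub_sub, sq_add_sq_rotate]

theorem mul_add_mul_rotate (a b x y : ℝ) :
    (a * cos θ - b * sin θ) * (x * cos θ - y * sin θ)
      + (a * sin θ + b * cos θ) * (x * sin θ + y * cos θ) = a * x + b * y := by
  linear_combination (a * x + b * y) * sin_sq_add_cos_sq θ

theorem twist_fst_rotate (X Y q₁ q₂ p₁ p₂ : ℝ) :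
    (p₁ * cos θ - p₂ * sin θ) + X * (q₁ * cos θ - q₂ * sin θ) + Y * (q₁ * sin θ + q₂ * cos θ)
      = (p₁ + X * q₁ + Y * q₂) * cos θ - (p₂ + X * q₂ - Y * q₁) * sin θ := by
  ring

theorem twist_snd_rotate (X Y q₁ q₂ p₁ p₂ : ℝ) :
    (p₁ * sin θ + p₂ * cos θ) + X * (q₁ * sin θ + q₂ * cos θ) - Y * (q₁ * cos θ - q₂ * sin θ)
      = (p₁ + X * q₁ + Y * q₂) * sin θ + (p₂ + X * q₂ - Y * q₁) * cos θ := by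
  ring

end Rotation

theorem stmt_13_general (Fp Fq Fl ν m g l : ℝ) (q₁ q₂ p₁ p₂ : ℝ) :
    ∀ θ : ℝ,
      HamRedVert Fp Fq Fl ν m g l
        (q₁ * Real.cos θ - q₂ * Real.sin θ) (q₁ * Real.sin θ + q₂ * Real.cos θ)
        (p₁ * Real.cos θ - p₂ * Real.sin θ) (p₁ * Real.sin θ + p₂ * Real.cos θ)
      = HamRedVert Fp Fq Fl ν m g l q₁ q₂ p₁ p₂ := by
  intro θ
  unfold HamRedVert
  simp only [one_sub_sq_sub_sq_rotate, sq_add_sq_rotate, mul_add_mul_rotate]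
  set Γ := √(1 - q₁^2 - q₂^2)
  rw [twist_fst_rotate, twist_snd_rotate]
  linear_combination (Fp / 2) *
    sq_add_sq_rotate θ (p₁ + Fl * Γ * q₁ + ν * (1 / (1 + Γ)) * q₂)
      (p₂ + Fl * Γ * q₂ - ν * (1 / (1 + Γ)) * q₁)

/-- The vertical reduced Hamiltonian (HamRedVert) is invariant under the diagonal
SO(2) action rotating `(q₁,q₂)` and `(p₁,p₂)` simultaneously. -/
theorem stmt_13 (Fp Fq Fl ν m g l : ℝ) (q₁ q₂ p₁ p₂ : ℝ)
    (hq : q₁^2 + q₂^2 < 1) :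
    ∀ θ : ℝ,
      HamRedVert Fp Fq Fl ν m g l
        (q₁ * Real.cos θ - q₂ * Real.sin θ) (q₁ * Real.sin θ + q₂ * Real.cos θ)
        (p₁ * Real.cos θ - p₂ * Real.sin θ) (p₁ * Real.sin θ + p₂ * Real.cos θ)
      = HamRedVert Fp Fq Fl ν m g l q₁ q₂ p₁ p₂ :=
  stmt_13_general Fp Fq Fl ν m g l q₁ q₂ p₁ p₂
end

section
/- Let f₁, f₂, μ be real numbers with f₁ > f₂ > 0, and define D₄ = 128(f₁−f₂)²(f₁+f₂)⁵·(−(f₁+f₂)(f₁² + 4f₁f₂ + f₂²)μ + (f₁² + 10f₁f₂ + f₂²)f₁f₂), D₆ = −2048(f₁+f₂)⁹(f₁−f₂)·((2f₁² + 13f₁f₂ + 2f₂²)(f₁+f₂)²μ² − (f₁+f₂)(11f₁² + 46f₁f₂ + 11f₂²)μf₁f₂ + (9f₁² + 50f₁f₂ + 9f₂²)f₁²f₂²), and D₈ = 16384(f₁+f₂)¹¹·(−2(8f₁⁴ + 91f₁³f₂ + 177f₁²f₂² + 91f₁f₂³ + 8f₂⁴)(f₁+f₂)³μ³ + (2f₁⁶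 + 150f₁⁵f₂ + 1113f₁⁴f₂² + 1970f₁³f₂³ + 1113f₁²f₂⁴ + 150f₁f₂⁵ + 2f₂⁶)(f₁+f₂)²μ² − (f₁+f₂)(4f₁⁶ + 345f₁⁵f₂ + 2226f₁⁴f₂² + 3850f₁³f₂³ + 2226f₁²f₂⁴ + 345f₁f₂⁵ + 4f₂⁶)μf₁f₂ + (2f₁⁶ + 211f₁⁵f₂ + 1466f₁⁴f₂² + 2642f₁³f₂³ + 1466f₁²f₂⁴ + 211f₁f₂⁵ + 2f₂⁶)f₁²f₂²). Then D₄, D₆, D₈ do not all vanish, i.e. (D₄, D₆, D₈) ≠ (0, 0, 0). -/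
/-!
Since `f₁ ≠ f₂` and `f₁ + f₂ > 0`, the vanishing of `D₄` and `D₆` means the vanishing of their
factors `twistLinear` (affine in `μ`) and `twistQuadratic` (quadratic in `μ`). Eliminating `μ`
between them gives a resultant `-5 f₁³ f₂³ (f₁ - f₂)² (5 f₁² + 26 f₁ f₂ + 5 f₂²)`, which is
negative for `f₁ > f₂ > 0`; so `D₄` and `D₆` already cannot vanish together.
-/

section

variable {R : Type*} [CommRing R]

def twistLinear (f₁ f₂ μ : R) : R :=
  -(f₁ + f₂)*(f₁^2 + 4*f₁*f₂ + f₂^2)*μ + (f₁^2 + 10*f₁*f₂ + f₂^2)*f₁*f₂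

def twistQuadratic (f₁ f₂ μ : R) : R :=
  (2*f₁^2 + 13*f₁*f₂ + 2*f₂^2)*(f₁ + f₂)^2*μ^2
    - (f₁ + f₂)*(11*f₁^2 + 46*f₁*f₂ + 11*f₂^2)*μ*f₁*f₂
    + (9*f₁^2 + 50*f₁*f₂ + 9*f₂^2)*f₁^2*f₂^2

theorem sq_mul_twistQuadratic_eq (f₁ f₂ μ : R) :
    (f₁^2 + 4*f₁*f₂ + f₂^2)^2 * twistQuadratic f₁ f₂ μ
      = -5*f₁^3*f₂^3*(f₁ - f₂)^2*(5*f₁^2 + 26*f₁*f₂ + 5*f₂^2)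
        + twistLinear f₁ f₂ μ *
          ((2*f₁^2 + 13*f₁*f₂ + 2*f₂^2) * twistLinear f₁ f₂ μ
            + f₁*f₂*((11*f₁^2 + 46*f₁*f₂ + 11*f₂^2)*(f₁^2 + 4*f₁*f₂ + f₂^2)
                - 2*(2*f₁^2 + 13*f₁*f₂ + 2*f₂^2)*(f₁^2 + 10*f₁*f₂ + f₂^2))) := by
  unfold twistLinear twistQuadratic
  ring

end

theorem twistQuadratic_ne_zero_of_twistLinear_eq_zero {R : Type*} [CommRing R] [LinearOrder R]
    [IsStrictOrderedRing R] {f₁ f₂ μ : R} (h₂ : 0 < f₂) (h₁ : f₂ < f₁)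
    (hL : twistLinear f₁ f₂ μ = 0) : twistQuadratic f₁ f₂ μ ≠ 0 := by
  intro hQ
  have hf₁ : 0 < f₁ := h₂.trans h₁
  have hd : 0 < f₁ - f₂ := sub_pos.mpr h₁
  have hres := sq_mul_twistQuadratic_eq f₁ f₂ μ
  rw [hL, hQ] at hres
  have : 0 < 5*f₁^3*f₂^3*(f₁ - f₂)^2*(5*f₁^2 + 26*f₁*f₂ + 5*f₂^2) := by positivity
  linarith

theorem stmt_19_general (f₁ f₂ μ D₄ D₆ D₈ : ℝ) (h₁ : f₂ < f₁) (h₂ : 0 < f₂)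
    (hD₄ : D₄ = 128*(f₁ - f₂)^2*(f₁ + f₂)^5 *
      (-(f₁ + f₂)*(f₁^2 + 4*f₁*f₂ + f₂^2)*μ + (f₁^2 + 10*f₁*f₂ + f₂^2)*f₁*f₂))
    (hD₆ : D₆ = -2048*(f₁ + f₂)^9*(f₁ - f₂) *
      ((2*f₁^2 + 13*f₁*f₂ + 2*f₂^2)*(f₁ + f₂)^2*μ^2
        - (f₁ + f₂)*(11*f₁^2 + 46*f₁*f₂ + 11*f₂^2)*μ*f₁*f₂
        + (9*f₁^2 + 50*f₁*f₂ + 9*f₂^2)*f₁^2*f₂^2)) :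
    ¬(D₄ = 0 ∧ D₆ = 0 ∧ D₈ = 0) := by
  rintro ⟨h4, h6, -⟩
  have hs : 0 < f₁ + f₂ := by linarith
  have hd : f₁ - f₂ ≠ 0 := sub_ne_zero.mpr h₁.ne'
  have hL : 128*(f₁ - f₂)^2*(f₁ + f₂)^5 * twistLinear f₁ f₂ μ = 0 := hD₄ ▸ h4
  have hQ : -2048*(f₁ + f₂)^9*(f₁ - f₂) * twistQuadratic f₁ f₂ μ = 0 := hD₆ ▸ h6
  refine twistQuadratic_ne_zero_of_twistLinear_eq_zero (μ := μ) h₂ h₁ ?_ ?_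
  · exact (mul_eq_zero.mp hL).resolve_left (by positivity)
  · exact (mul_eq_zero.mp hQ).resolve_left (by simp [hd, hs.ne'])

/-- Step 4 of the proof of Theorem 4.4 (twist condition): for `f₁ > f₂ > 0` the
twist quantities `D₄, D₆, D₈` of the Birkhoff normal form do not all vanish. -/
theorem stmt_19 (f₁ f₂ μ D₄ D₆ D₈ : ℝ) (h₁ : f₂ < f₁) (h₂ : 0 < f₂)
    (hD₄ : D₄ = 128*(f₁ - f₂)^2*(f₁ + f₂)^5 *
      (-(f₁ + f₂)*(f₁^2 + 4*f₁*f₂ + f₂^2)*μ + (f₁^2 + 10*f₁*f₂ + f₂^2)*f₁*f₂))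
    (hD₆ : D₆ = -2048*(f₁ + f₂)^9*(f₁ - f₂) *
      ((2*f₁^2 + 13*f₁*f₂ + 2*f₂^2)*(f₁ + f₂)^2*μ^2
        - (f₁ + f₂)*(11*f₁^2 + 46*f₁*f₂ + 11*f₂^2)*μ*f₁*f₂
        + (9*f₁^2 + 50*f₁*f₂ + 9*f₂^2)*f₁^2*f₂^2))
    (hD₈ : D₈ = 16384*(f₁ + f₂)^11 *
      (-2*(8*f₁^4 + 91*f₁^3*f₂ + 177*f₁^2*f₂^2 + 91*f₁*f₂^3 + 8*f₂^4)*(f₁ + f₂)^3*μ^3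
        + (2*f₁^6 + 150*f₁^5*f₂ + 1113*f₁^4*f₂^2 + 1970*f₁^3*f₂^3 + 1113*f₁^2*f₂^4
            + 150*f₁*f₂^5 + 2*f₂^6)*(f₁ + f₂)^2*μ^2
        - (f₁ + f₂)*(4*f₁^6 + 345*f₁^5*f₂ + 2226*f₁^4*f₂^2 + 3850*f₁^3*f₂^3
            + 2226*f₁^2*f₂^4 + 345*f₁*f₂^5 + 4*f₂^6)*μ*f₁*f₂
        + (2*f₁^6 + 211*f₁^5*f₂ + 1466*f₁^4*f₂^2 + 2642*f₁^3*f₂^3 + 1466*f₁^2*f₂^4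
            + 211*f₁*f₂^5 + 2*f₂^6)*f₁^2*f₂^2)) :
    ¬(D₄ = 0 ∧ D₆ = 0 ∧ D₈ = 0) :=
  stmt_19_general f₁ f₂ μ D₄ D₆ D₈ h₁ h₂ hD₄ hD₆
end
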